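/- Let a be a real number with |a| > 1 and let f_a : ℝ → ℝ be defined by f_a(x) = 1/((1+(x−a)²)·(1+(x+a)²)). Then f_a attains its global maximum value 1/(4a²) exactly at the two points x = √(a²−1) and x = −√(a²−1); that is, f_a(±√(a²−1)) = 1/(4a²), and f_a(x) < 1/(4a²) for every x ∉ {√(a²−1), −√(a²−1)}. In particular f_a is bimodal. -/

import Mathlib

/-! Completing the square in `x²` gives
`(1 + (x - a)²)(1 + (x + a)²) = (x² - (a² - 1))² + 4a²`, so the denominator is at least `4a²`,
with equality exactly when `x² = a² - 1`, i.e. at `x = ±√(a² - 1)`. -/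

lemma one_add_sub_sq_mul_one_add_add_sq (x a : ℝ) :
    (1 + (x - a) ^ 2) * (1 + (x + a) ^ 2) = (x ^ 2 - (a ^ 2 - 1)) ^ 2 + 4 * a ^ 2 := by
  ring

lemma one_div_sq_add_lt_one_div {t d : ℝ} (hd : 0 < d) (ht : t ≠ 0) :
    1 / (t ^ 2 + d) < 1 / d :=
  one_div_lt_one_div_of_lt hd (lt_add_of_pos_left d (pow_two_pos_of_ne_zero ht))

lemma Real.sq_ne_of_ne_sqrt_of_ne_neg_sqrt {x c : ℝ} (hc : 0 ≤ c)
    (h₁ : x ≠ √c) (h₂ : x ≠ -√c) : x ^ 2 ≠ c := by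
  rw [← Real.sq_sqrt hc, Ne, sq_eq_sq_iff_eq_or_eq_neg]
  exact not_or_intro h₁ h₂

/-- For `|a| > 1`, the density `f_a(x) = 1/((1+(x-a)²)(1+(x+a)²))` attains its global
maximum value `1/(4a²)` exactly at the two points `±√(a²-1)`: it is bimodal. -/
theorem cauchy_conditional_density_bimodal (a : ℝ) (ha : 1 < |a|) (f : ℝ → ℝ)
    (hf : f = fun x : ℝ => 1 / ((1 + (x - a) ^ 2) * (1 + (x + a) ^ 2))) :
    f (Real.sqrt (a ^ 2 - 1)) = 1 / (4 * a ^ 2) ∧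
    f (-Real.sqrt (a ^ 2 - 1)) = 1 / (4 * a ^ 2) ∧
    ∀ x : ℝ, x ≠ Real.sqrt (a ^ 2 - 1) → x ≠ -Real.sqrt (a ^ 2 - 1) →
      f x < 1 / (4 * a ^ 2) := by
  have ha2 : 1 < a ^ 2 := (one_lt_sq_iff_one_lt_abs a).2 ha
  have hc : 0 ≤ a ^ 2 - 1 := by linarith
  subst hf
  simp only [one_add_sub_sq_mul_one_add_add_sq]
  refine ⟨?_, ?_, fun x h₁ h₂ => ?_⟩
  · rw [Real.sq_sqrt hc, sub_self, zero_pow two_ne_zero, zero_add]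
  · rw [neg_sq, Real.sq_sqrt hc, sub_self, zero_pow two_ne_zero, zero_add]
  · exact one_div_sq_add_lt_one_div (by linarith)
      (sub_ne_zero.2 (Real.sq_ne_of_ne_sqrt_of_ne_neg_sqrt hc h₁ h₂))
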